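/- Let φ : (G′,g′) → (G,g) be an unramified finite harmonic morphism of weighted graphs and let S ⊆ E(G), with S′ = { e′ ∈ E(G′) : φ(e′) ∈ S }. Then: (a) every connected component F′ of the subgraph [S′] maps onto the connected component F of [S] containing its image, and the number Σ{ d_φ(u′) : u′ ∈ V(F′), φ(u′) = u } is independent of the choice of vertex u ∈ V(F); (b) the contraction φ_S : G′/S′ → G/S, defined to agree with c_S∘φ and with the degrees of φ on all uncontracted elements and to send each contracted vertex [F′] to the corresponding contracted vertex [F] with the degree from (a), is again an unramified finite harmonic morphism of weighted graphs. -/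

import Mathlib

/-!
A step `a ↦ rt a` of `[S]` with `a ∈ S` lifts to `[S']`: a vertex of `[S']` over `rt a` is
the root of a half-edge over `S`, so it has positive degree, and by harmonicity it has a
tangent direction over `a`. Hence every component `F'` of `[S']` maps onto a component `F`
of `[S]`. Across an edge of `S` the involution matches the half-edges of `F'` over its two
ends, degrees included, so the fibre degree `d = Σ {d(u') : u' ∈ V(F'), φ u' = u}` does not
depend on `u ∈ V(F)`; harmonicity of `φ_S` at `[F']` is harmonicity of `φ` summed over
`V(F')`. Since a connected graph has `#V ≤ #E + 1`, the genus of `F` is a natural number and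
`χ([F]) = Σ_{u ∈ V(F)} χ(u)`; summing `χ(u') = d(u') χ(φ u')` over `V(F')` then gives
`χ([F']) = d χ([F])`. A vertex outside `[S']` mapping into `[S]` has degree `0` and no
tangent directions, so it is unramified for `φ_S` as well.
-/

namespace TropDR

open Finset

/-- `Finset.filter` with classical decidability. -/
noncomputable def cfilter {α : Type*} (p : α → Prop) (s : Finset α) : Finset α :=
  @Finset.filter α p (Classical.decPred p) s

/-- A graph with legs: a finite set `X` together with an idempotent root map `rt`
and an involution `inv` fixing every root vertex. -/
structure PGraph where
  X : Type
  [fintypeX : Fintype X]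
  [decEqX : DecidableEq X]
  rt : X → X
  inv : X → X
  rt_idem : ∀ x, rt (rt x) = rt x
  inv_invol : ∀ x, inv (inv x) = x
  inv_fix_rt : ∀ x, inv (rt x) = rt x

attribute [instance] PGraph.fintypeX PGraph.decEqX

namespace PGraph

variable (G : PGraph)

/-- Vertices are the fixed points (= the image) of the root map. -/
def IsVertex (x : G.X) : Prop := G.rt x = x

/-- Half-edges are the non-vertices. -/
def IsHalf (x : G.X) : Prop := G.rt x ≠ x

/-- Legs are the `inv`-fixed half-edges. -/
def IsLeg (x : G.X) : Prop := G.IsHalf x ∧ G.inv x = x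

/-- Halves of genuine edges: half-edges moved by the involution. -/
def IsEdgeHalf (x : G.X) : Prop := G.IsHalf x ∧ G.inv x ≠ x

noncomputable def vertexSet : Finset G.X := cfilter (fun x => G.IsVertex x) Finset.univ

noncomputable def legSet : Finset G.X := cfilter (fun x => G.IsLeg x) Finset.univ

noncomputable def edgeHalfSet : Finset G.X := cfilter (fun x => G.IsEdgeHalf x) Finset.univ

/-- Tangent directions at a vertex `v`: half-edges rooted at `v`. -/
noncomputable def tangents (v : G.X) : Finset G.X :=
  cfilter (fun h => G.IsHalf h ∧ G.rt h = v) Finset.univ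

noncomputable def valence (v : G.X) : ℕ := (G.tangents v).card

/-- The number of edges: half the number of edge half-edges. -/
noncomputable def numEdges : ℕ := G.edgeHalfSet.card / 2

noncomputable def numLegs : ℕ := G.legSet.card

noncomputable def numVertices : ℕ := G.vertexSet.card

/-- Connectedness: the equivalence relation generated by `x ∼ rt x` and `x ∼ inv x`
has a single class (and `X` is nonempty). -/
def Connected : Prop :=
  Nonempty G.X ∧ ∀ x y : G.X, Relation.EqvGen (fun a b => G.rt a = b ∨ G.inv a = b) x y

/-- A subgraph: a subset of `X` closed under the root map and the involution. -/
def IsSubgraph (F : Finset G.X) : Prop :=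
  (∀ x ∈ F, G.rt x ∈ F) ∧ (∀ x ∈ F, G.inv x ∈ F)

/-- Valency of `v` inside a subgraph `F`. -/
noncomputable def valIn (F : Finset G.X) (v : G.X) : ℕ := (G.tangents v ∩ F).card

end PGraph

/-- A morphism of graphs: commutes with the root maps and involutions,
and maps no edge into a leg. -/
structure GraphHom (G' G : PGraph) where
  toFun : G'.X → G.X
  map_rt : ∀ x, toFun (G'.rt x) = G.rt (toFun x)
  map_inv : ∀ x, toFun (G'.inv x) = G.inv (toFun x)
  edge_not_leg : ∀ h, G'.IsEdgeHalf h → ¬ G.IsLeg (toFun h)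

/-- A harmonic morphism of graphs: a graph morphism together with a degree function. -/
structure HarmonicHom (G' G : PGraph) extends GraphHom G' G where
  deg : G'.X → ℕ
  deg_edge : ∀ h, G'.IsEdgeHalf h → deg (G'.inv h) = deg h
  deg_zero_iff : ∀ h, G'.IsHalf h → (deg h = 0 ↔ G.IsVertex (toFun h))
  harmonic : ∀ v', G'.IsVertex v' → ∀ h, G.IsHalf h → G.rt h = toFun v' →
    deg v' = ∑ h' ∈ cfilter (fun h' => toFun h' = h) (G'.tangents v'), deg h'

namespace HarmonicHom

variable {G' G : PGraph} (φ : HarmonicHom G' G)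

/-- A harmonic morphism is finite if it has positive degree on every half-edge. -/
def Finite : Prop := ∀ h, G'.IsHalf h → 0 < φ.deg h

/-- The sum of the degrees over the vertex fiber of `v`. -/
noncomputable def vertexFiberDeg (v : G.X) : ℕ :=
  ∑ v' ∈ cfilter (fun v' => φ.toFun v' = v) G'.vertexSet, φ.deg v'

end HarmonicHom

/-- A weighted graph: a graph together with a genus function on (all elements;
only the values at vertices are relevant). -/
structure WGraph extends PGraph where
  gw : X → ℕ

namespace WGraph

variable (G : WGraph)

/-- The genus of a (connected) weighted graph. -/
noncomputable def genus : ℤ :=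
  (G.toPGraph.numEdges : ℤ) - (G.toPGraph.numVertices : ℤ) + 1 +
    ∑ v ∈ G.toPGraph.vertexSet, (G.gw v : ℤ)

/-- The Euler characteristic of a vertex. -/
noncomputable def chiV (v : G.X) : ℤ :=
  2 - 2 * (G.gw v : ℤ) - (G.toPGraph.valence v : ℤ)

/-- The Euler characteristic of a (connected) weighted graph. -/
noncomputable def chi : ℤ := 2 - 2 * G.genus - (G.toPGraph.numLegs : ℤ)

end WGraph

/-- The ramification degree of a (finite) harmonic morphism of weighted graphs at `v'`. -/
noncomputable def ram {G' G : WGraph} (φ : HarmonicHom G'.toPGraph G.toPGraph) (v' : G'.X) : ℤ :=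
  (φ.deg v' : ℤ) * G.chiV (φ.toFun v') - G'.chiV v'

def Unramified {G' G : WGraph} (φ : HarmonicHom G'.toPGraph G.toPGraph) : Prop :=
  ∀ v', G'.toPGraph.IsVertex v' → ram φ v' = 0

def Effective {G' G : WGraph} (φ : HarmonicHom G'.toPGraph G.toPGraph) : Prop :=
  ∀ v', G'.toPGraph.IsVertex v' → 0 ≤ ram φ v'

theorem mem_cfilter {α : Type*} {p : α → Prop} {s : Finset α} {x : α} :
    x ∈ cfilter p s ↔ x ∈ s ∧ p x :=
  @Finset.mem_filter α p (Classical.decPred p) s x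

/-- A finset of half-edges encodes a set of edges if it consists of edge half-edges and
is closed under the involution. -/
def IsEdgeSet (G : PGraph) (SH : Finset G.X) : Prop :=
  ∀ h ∈ SH, G.IsEdgeHalf h ∧ G.inv h ∈ SH

/-- The underlying set `X([S])` of the subgraph generated by a set `SH` of (half-)edges:
the half-edges in `SH` together with their root vertices. -/
noncomputable def sgSet (G : PGraph) (SH : Finset G.X) : Finset G.X :=
  SH ∪ SH.image G.rt

/-- One step of the relation identifying the elements of each connected component of
the subgraph `[S]` generated by `SH`. -/
def contrRel (G : PGraph) (SH : Finset G.X) (a b : G.X) : Prop :=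
  a ∈ sgSet G SH ∧ b ∈ sgSet G SH ∧ (G.rt a = b ∨ G.inv a = b)

/-- The setoid on `X(G)` collapsing every connected component of `[S]` to a point. -/
noncomputable def contrSetoid (G : PGraph) (SH : Finset G.X) : Setoid G.X :=
  ⟨Relation.EqvGen (contrRel G SH), Relation.EqvGen.is_equivalence _⟩

theorem mem_sgSet_rt (G : PGraph) (SH : Finset G.X) {x : G.X} (hx : x ∈ sgSet G SH) :
    G.rt x ∈ sgSet G SH := by
  rcases Finset.mem_union.mp hx with h | h
  · exact Finset.mem_union.mpr (Or.inr (Finset.mem_image_of_mem _ h))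
  · rcases Finset.mem_image.mp h with ⟨y, hy, rfl⟩
    rw [G.rt_idem]
    exact Finset.mem_union.mpr (Or.inr (Finset.mem_image.mpr ⟨y, hy, rfl⟩))

theorem mem_sgSet_inv (G : PGraph) (SH : Finset G.X) (hSH : IsEdgeSet G SH) {x : G.X}
    (hx : x ∈ sgSet G SH) : G.inv x ∈ sgSet G SH := by
  rcases Finset.mem_union.mp hx with h | h
  · exact Finset.mem_union.mpr (Or.inl (hSH x h).2)
  · rcases Finset.mem_image.mp h with ⟨y, hy, rfl⟩
    rw [G.inv_fix_rt]
    exact Finset.mem_union.mpr (Or.inr (Finset.mem_image.mpr ⟨y, hy, rfl⟩))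

theorem eqv_rt (G : PGraph) (SH : Finset G.X) {x : G.X} (hx : x ∈ sgSet G SH) :
    Relation.EqvGen (contrRel G SH) x (G.rt x) :=
  Relation.EqvGen.rel _ _ ⟨hx, mem_sgSet_rt G SH hx, Or.inl rfl⟩

theorem eqv_inv (G : PGraph) (SH : Finset G.X) (hSH : IsEdgeSet G SH) {x : G.X}
    (hx : x ∈ sgSet G SH) :
    Relation.EqvGen (contrRel G SH) x (G.inv x) :=
  Relation.EqvGen.rel _ _ ⟨hx, mem_sgSet_inv G SH hSH hx, Or.inr rfl⟩

theorem rt_respects (G : PGraph) (SH : Finset G.X) :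
    ∀ a b, Relation.EqvGen (contrRel G SH) a b →
      Relation.EqvGen (contrRel G SH) (G.rt a) (G.rt b) := by
  intro a b h
  induction h with
  | rel a b hab =>
      exact Relation.EqvGen.trans _ _ _
        (Relation.EqvGen.trans _ _ _ (Relation.EqvGen.symm _ _ (eqv_rt G SH hab.1))
          (Relation.EqvGen.rel _ _ hab))
        (eqv_rt G SH hab.2.1)
  | refl a => exact Relation.EqvGen.refl _
  | symm a b _ ih => exact Relation.EqvGen.symm _ _ ih
  | trans a b c _ _ ih1 ih2 => exact Relation.EqvGen.trans _ _ _ ih1 ih2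

theorem inv_respects (G : PGraph) (SH : Finset G.X) (hSH : IsEdgeSet G SH) :
    ∀ a b, Relation.EqvGen (contrRel G SH) a b →
      Relation.EqvGen (contrRel G SH) (G.inv a) (G.inv b) := by
  intro a b h
  induction h with
  | rel a b hab =>
      exact Relation.EqvGen.trans _ _ _
        (Relation.EqvGen.trans _ _ _ (Relation.EqvGen.symm _ _ (eqv_inv G SH hSH hab.1))
          (Relation.EqvGen.rel _ _ hab))
        (eqv_inv G SH hSH hab.2.1)
  | refl a => exact Relation.EqvGen.refl _
  | symm a b _ ih => exact Relation.EqvGen.symm _ _ ih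
  | trans a b c _ _ ih1 ih2 => exact Relation.EqvGen.trans _ _ _ ih1 ih2

theorem eqv_cases (G : PGraph) (SH : Finset G.X) :
    ∀ a b, Relation.EqvGen (contrRel G SH) a b →
      a = b ∨ (a ∈ sgSet G SH ∧ b ∈ sgSet G SH) := by
  intro a b h
  induction h with
  | rel a b hab => exact Or.inr ⟨hab.1, hab.2.1⟩
  | refl a => exact Or.inl rfl
  | symm a b _ ih =>
      rcases ih with h' | h'
      · exact Or.inl h'.symm
      · exact Or.inr ⟨h'.2, h'.1⟩
  | trans a b c _ _ ih1 ih2 =>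
      rcases ih1 with h1 | h1
      · rcases ih2 with h2 | h2
        · exact Or.inl (h1.trans h2)
        · exact Or.inr ⟨h1 ▸ h2.1, h2.2⟩
      · rcases ih2 with h2 | h2
        · exact Or.inr ⟨h1.1, h2 ▸ h1.2⟩
        · exact Or.inr ⟨h1.1, h2.2⟩

/-- The contraction `G/S` of `G` along the set of edges encoded by the inv-closed set `SH`
of half-edges: the quotient collapsing each connected component of `[S]` to a vertex. -/
noncomputable def contract (G : PGraph) (SH : Finset G.X) (hSH : IsEdgeSet G SH) :
    PGraph where
  X := Quotient (contrSetoid G SH)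
  fintypeX := @Quotient.fintype G.X _ (contrSetoid G SH) (fun _ _ => Classical.dec _)
  decEqX := fun _ _ => Classical.dec _
  rt := Quotient.lift (fun x => Quotient.mk (contrSetoid G SH) (G.rt x))
    (fun a b hab => Quotient.sound (rt_respects G SH a b hab))
  inv := Quotient.lift (fun x => Quotient.mk (contrSetoid G SH) (G.inv x))
    (fun a b hab => Quotient.sound (inv_respects G SH hSH a b hab))
  rt_idem := by
    intro q
    refine Quotient.inductionOn q (fun a => ?_)
    simpa using congrArg (Quotient.mk (contrSetoid G SH)) (G.rt_idem a)
  inv_invol := by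
    intro q
    refine Quotient.inductionOn q (fun a => ?_)
    simpa using congrArg (Quotient.mk (contrSetoid G SH)) (G.inv_invol a)
  inv_fix_rt := by
    intro q
    refine Quotient.inductionOn q (fun a => ?_)
    simpa using congrArg (Quotient.mk (contrSetoid G SH)) (G.inv_fix_rt a)

/-- The connected component (inside `[S]`) of `x`, as a finset of `X(G)`. -/
noncomputable def componentSet (G : PGraph) (SH : Finset G.X) (x : G.X) : Finset G.X :=
  cfilter (fun y => (contrSetoid G SH).r x y) Finset.univ

/-- Genus of the subgraph spanned by a finset `F` (all of whose half-edges are halves of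
edges with both halves in `F`). -/
noncomputable def finsetGenus (G : WGraph) (F : Finset G.X) : ℤ :=
  (((cfilter (fun x => G.toPGraph.IsEdgeHalf x) F).card / 2 : ℕ) : ℤ) -
    ((cfilter (fun x => G.toPGraph.IsVertex x) F).card : ℤ) + 1 +
    ∑ v ∈ cfilter (fun x => G.toPGraph.IsVertex x) F, (G.gw v : ℤ)

theorem componentSet_eq_of_eqv (G : PGraph) (SH : Finset G.X) {a b : G.X}
    (hab : Relation.EqvGen (contrRel G SH) a b) :
    componentSet G SH a = componentSet G SH b := by
  apply Finset.ext
  intro y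
  simp only [componentSet]
  rw [mem_cfilter, mem_cfilter]
  constructor
  · rintro ⟨-, h⟩
    exact ⟨Finset.mem_univ y, Relation.EqvGen.trans _ _ _ (Relation.EqvGen.symm _ _ hab) h⟩
  · rintro ⟨-, h⟩
    exact ⟨Finset.mem_univ y, Relation.EqvGen.trans _ _ _ hab h⟩

/-- The weighted contraction `(G,g)/S`: each contracted component becomes a vertex whose
weight is the genus of that component. -/
noncomputable def wcontract (G : WGraph) (SH : Finset G.X)
    (hSH : IsEdgeSet G.toPGraph SH) : WGraph where
  toPGraph := contract G.toPGraph SH hSH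
  gw := Quotient.lift
    (fun x => if x ∈ sgSet G.toPGraph SH then
        (finsetGenus G (componentSet G.toPGraph SH x)).toNat
      else G.gw x)
    (by
      intro a b hab
      rcases eqv_cases G.toPGraph SH a b hab with rfl | ⟨ha, hb⟩
      · rfl
      · simp only [ha, hb, if_pos]
        rw [componentSet_eq_of_eqv G.toPGraph SH hab])

/-- The set `S' = φ⁻¹(S)` of half-edges of the source lying over the half-edges in `SH`. -/
noncomputable def preimHalves {G' G : PGraph} (φ : HarmonicHom G' G) (SH : Finset G.X) :
    Finset G'.X :=
  cfilter (fun h' => G'.IsEdgeHalf h' ∧ φ.toFun h' ∈ SH) Finset.univ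

theorem isEdgeHalf_inv (G : PGraph) {h : G.X} (hE : G.IsEdgeHalf h) :
    G.IsEdgeHalf (G.inv h) := by
  constructor
  · intro hc
    have h1 : G.inv (G.inv h) = G.inv h := by
      conv_lhs => rw [← hc]
      rw [G.inv_fix_rt, hc]
    rw [G.inv_invol] at h1
    exact hE.2 h1.symm
  · intro hc
    rw [G.inv_invol] at hc
    exact hE.2 hc.symm

theorem preimHalves_isEdgeSet {G' G : PGraph} (φ : HarmonicHom G' G) (SH : Finset G.X)
    (hSH : IsEdgeSet G SH) : IsEdgeSet G' (preimHalves φ SH) := by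
  intro h' hh'
  rcases mem_cfilter.mp hh' with ⟨-, hE, hmem⟩
  refine ⟨hE, mem_cfilter.mpr ⟨Finset.mem_univ _, isEdgeHalf_inv G' hE, ?_⟩⟩
  rw [φ.map_inv]
  exact (hSH _ hmem).2
/-- `ψS` is the contraction of the harmonic morphism `ψ` along `SH`: it agrees with
`c_S ∘ ψ` on underlying sets, has the degrees of `ψ` on all uncontracted elements, and on
each contracted vertex `[F']` its degree is `Σ { d_ψ(u') : u' ∈ V(F'), ψ(u') = u }` for
any fixed vertex `u` of the corresponding component `F` of `[S]`. -/
def IsContractionHom {K' K : WGraph} (ψ : HarmonicHom K'.toPGraph K.toPGraph)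
    (SH : Finset K.X) (hSH : IsEdgeSet K.toPGraph SH)
    (SH' : Finset K'.X) (hSH' : IsEdgeSet K'.toPGraph SH')
    (ψS : HarmonicHom (wcontract K' SH' hSH').toPGraph (wcontract K SH hSH).toPGraph) :
    Prop :=
  (∀ x : K'.X,
      ψS.toFun (Quotient.mk (contrSetoid K'.toPGraph SH') x) =
        Quotient.mk (contrSetoid K.toPGraph SH) (ψ.toFun x)) ∧
  (∀ x : K'.X, x ∉ sgSet K'.toPGraph SH' →
      ψS.deg (Quotient.mk (contrSetoid K'.toPGraph SH') x) = ψ.deg x) ∧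
  (∀ x : K'.X, x ∈ sgSet K'.toPGraph SH' → ∀ u : K.X, K.toPGraph.IsVertex u →
      (contrSetoid K.toPGraph SH).r u (ψ.toFun x) →
      ψS.deg (Quotient.mk (contrSetoid K'.toPGraph SH') x) =
        ∑ u' ∈ cfilter (fun u' => K'.toPGraph.IsVertex u' ∧
            (contrSetoid K'.toPGraph SH').r u' x ∧ ψ.toFun u' = u) Finset.univ,
          ψ.deg u')

section Contraction

variable {K : PGraph} {TH : Finset K.X}

theorem mem_tangents {v k : K.X} : k ∈ K.tangents v ↔ K.IsHalf k ∧ K.rt k = v := by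
  simp only [PGraph.tangents, mem_cfilter, Finset.mem_univ, true_and]

theorem IsEdgeSet.isEdgeHalf (hTH : IsEdgeSet K TH) {h : K.X} (hh : h ∈ TH) :
    K.IsEdgeHalf h :=
  (hTH h hh).1

theorem mem_sgSet_of_mem {h : K.X} (hh : h ∈ TH) : h ∈ sgSet K TH :=
  Finset.mem_union_left _ hh

theorem mem_sgSet_iff_of_isHalf {h : K.X} (hh : K.IsHalf h) : h ∈ sgSet K TH ↔ h ∈ TH := by
  refine ⟨fun hmem => ?_, mem_sgSet_of_mem⟩
  rcases Finset.mem_union.mp hmem with h1 | h1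
  · exact h1
  · obtain ⟨y, -, rfl⟩ := Finset.mem_image.mp h1
    exact absurd (K.rt_idem y) hh

theorem exists_mem_rt_eq_of_isVertex (hTH : IsEdgeSet K TH) {v : K.X} (hv : K.IsVertex v)
    (hmem : v ∈ sgSet K TH) : ∃ h ∈ TH, K.rt h = v := by
  rcases Finset.mem_union.mp hmem with h1 | h1
  · exact absurd hv (hTH.isEdgeHalf h1).1
  · exact Finset.mem_image.mp h1

theorem mem_sgSet_of_eqv {a b : K.X} (ha : a ∈ sgSet K TH)
    (h : Relation.EqvGen (contrRel K TH) a b) : b ∈ sgSet K TH := by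
  rcases eqv_cases K TH a b h with rfl | h1
  · exact ha
  · exact h1.2

theorem mk_eq_mk_iff {a b : K.X} :
    Quotient.mk (contrSetoid K TH) a = Quotient.mk (contrSetoid K TH) b ↔
      Relation.EqvGen (contrRel K TH) a b :=
  Quotient.eq (r := contrSetoid K TH)

theorem eq_of_mk_eq_mk {a b : K.X} (ha : a ∉ sgSet K TH)
    (h : Quotient.mk (contrSetoid K TH) a = Quotient.mk (contrSetoid K TH) b) : a = b :=
  (eqv_cases K TH a b (mk_eq_mk_iff.mp h)).resolve_right fun h1 => ha h1.1

theorem mk_injOn : Set.InjOn (Quotient.mk (contrSetoid K TH)) {a | a ∉ sgSet K TH} :=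
  fun _ ha _ _ hab => eq_of_mk_eq_mk ha hab

theorem contract_isVertex_mk_iff (hTH : IsEdgeSet K TH) {a : K.X} :
    (contract K TH hTH).IsVertex (Quotient.mk (contrSetoid K TH) a) ↔
      a ∈ sgSet K TH ∨ K.IsVertex a := by
  change Quotient.mk _ (K.rt a) = Quotient.mk _ a ↔ _
  rw [mk_eq_mk_iff]
  refine ⟨fun h => (eqv_cases K TH _ _ h).symm.imp (·.2) id, ?_⟩
  rintro (h | h)
  · exact Relation.EqvGen.symm _ _ (eqv_rt K TH h)
  · rw [h]
    exact Relation.EqvGen.refl _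

theorem contract_isHalf_mk_iff (hTH : IsEdgeSet K TH) {a : K.X} :
    (contract K TH hTH).IsHalf (Quotient.mk (contrSetoid K TH) a) ↔
      a ∉ sgSet K TH ∧ K.IsHalf a := by
  change ¬ (contract K TH hTH).IsVertex _ ↔ _
  rw [contract_isVertex_mk_iff hTH]
  unfold PGraph.IsHalf PGraph.IsVertex
  tauto

theorem isEdgeHalf_of_contract_isEdgeHalf_mk (hTH : IsEdgeSet K TH) {a : K.X}
    (ha : (contract K TH hTH).IsEdgeHalf (Quotient.mk (contrSetoid K TH) a)) :
    a ∉ sgSet K TH ∧ K.IsEdgeHalf a := by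
  obtain ⟨hhalf, hinv⟩ := ha
  obtain ⟨hnot, hhalf⟩ := (contract_isHalf_mk_iff hTH).mp hhalf
  exact ⟨hnot, hhalf, fun h => hinv (congrArg (Quotient.mk (contrSetoid K TH)) h)⟩

theorem isLeg_of_contract_isLeg_mk (hTH : IsEdgeSet K TH) {a : K.X}
    (ha : (contract K TH hTH).IsLeg (Quotient.mk (contrSetoid K TH) a)) :
    a ∉ sgSet K TH ∧ K.IsLeg a := by
  obtain ⟨hhalf, hinv⟩ := ha
  obtain ⟨hnot, hhalf⟩ := (contract_isHalf_mk_iff hTH).mp hhalf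
  exact ⟨hnot, hhalf, (eq_of_mk_eq_mk hnot hinv.symm).symm⟩

/-- The half-edges that are not contracted and are rooted in the component of `x`: they
become the tangent directions at the vertex `[x]` of the contraction. -/
noncomputable def outerTangents (K : PGraph) (TH : Finset K.X) (x : K.X) : Finset K.X :=
  cfilter (fun k => K.IsHalf k ∧ k ∉ sgSet K TH ∧ Relation.EqvGen (contrRel K TH) (K.rt k) x)
    Finset.univ

theorem mem_outerTangents {x k : K.X} :
    k ∈ outerTangents K TH x ↔
      K.IsHalf k ∧ k ∉ sgSet K TH ∧ Relation.EqvGen (contrRel K TH) (K.rt k) x := by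
  simp only [outerTangents, mem_cfilter, Finset.mem_univ, true_and]

theorem outerTangents_of_not_mem {x : K.X} (hx : x ∉ sgSet K TH) :
    outerTangents K TH x = K.tangents x := by
  ext k
  simp only [mem_outerTangents, PGraph.tangents, mem_cfilter, Finset.mem_univ, true_and]
  constructor
  · rintro ⟨hk, -, heqv⟩
    exact ⟨hk, eq_of_mk_eq_mk (mt (mem_sgSet_of_eqv · heqv) hx) (mk_eq_mk_iff.mpr heqv)⟩
  · rintro ⟨hk, rfl⟩
    exact ⟨hk, mt (mem_sgSet_rt K TH) hx, Relation.EqvGen.refl _⟩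

theorem mk_mem_contract_tangents_mk_iff (hTH : IsEdgeSet K TH) {x k : K.X} :
    Quotient.mk (contrSetoid K TH) k ∈
        (contract K TH hTH).tangents (Quotient.mk (contrSetoid K TH) x) ↔
      k ∈ outerTangents K TH x := by
  refine (mem_cfilter (α := (contract K TH hTH).X)).trans ?_
  rw [contract_isHalf_mk_iff hTH, mem_outerTangents]
  change _ ∧ _ ∧ Quotient.mk _ (K.rt k) = _ ↔ _
  rw [mk_eq_mk_iff]
  exact ⟨fun ⟨_, ⟨h1, h2⟩, h3⟩ => ⟨h2, h1, h3⟩,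
    fun ⟨h1, h2, h3⟩ => ⟨Finset.mem_univ _, ⟨h2, h1⟩, h3⟩⟩

theorem sum_cfilter_contract_tangents {M : Type*} [AddCommMonoid M] (hTH : IsEdgeSet K TH)
    (x : K.X) (p : (contract K TH hTH).X → Prop) (f : (contract K TH hTH).X → M) :
    ∑ q ∈ cfilter p ((contract K TH hTH).tangents (Quotient.mk (contrSetoid K TH) x)), f q =
      ∑ k ∈ cfilter (fun k => p (Quotient.mk (contrSetoid K TH) k)) (outerTangents K TH x),
        f (Quotient.mk (contrSetoid K TH) k) := by
  symm
  refine Finset.sum_nbij (Quotient.mk (contrSetoid K TH)) (fun k hk => ?_)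
    (mk_injOn.mono fun k hk => ?_) (fun q hq => ?_) (fun _ _ => rfl)
  · obtain ⟨hk, hp⟩ := mem_cfilter.mp hk
    exact mem_cfilter.mpr ⟨(mk_mem_contract_tangents_mk_iff hTH).mpr hk, hp⟩
  · exact (mem_outerTangents.mp (mem_cfilter.mp hk).1).2.1
  · induction q using Quotient.inductionOn with
    | h k =>
      obtain ⟨hk, hp⟩ := mem_cfilter.mp hq
      exact ⟨k, mem_cfilter.mpr ⟨(mk_mem_contract_tangents_mk_iff hTH).mp hk, hp⟩, rfl⟩

theorem contract_valence_mk (hTH : IsEdgeSet K TH) (x : K.X) :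
    (contract K TH hTH).valence (Quotient.mk (contrSetoid K TH) x) =
      (outerTangents K TH x).card := by
  refine (Finset.card_nbij (Quotient.mk (contrSetoid K TH))
    (fun k hk => (mk_mem_contract_tangents_mk_iff hTH).mpr hk)
    (mk_injOn.mono fun k hk => (mem_outerTangents.mp hk).2.1) (fun q hq => ?_)).symm
  induction q using Quotient.inductionOn with
  | h k => exact ⟨k, (mk_mem_contract_tangents_mk_iff hTH).mp hq, rfl⟩

theorem mem_componentSet {x y : K.X} :
    y ∈ componentSet K TH x ↔ Relation.EqvGen (contrRel K TH) x y := by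
  simp only [componentSet, mem_cfilter, Finset.mem_univ, true_and]
  rfl

theorem even_card_of_involution {α : Type*} (f : α → α) (s : Finset α)
    (hf : ∀ x ∈ s, f x ∈ s ∧ f (f x) = x ∧ f x ≠ x) : Even s.card := by
  rw [← ZMod.natCast_eq_zero_iff_even, Finset.card_eq_sum_ones, Nat.cast_sum, Nat.cast_one]
  exact Finset.sum_involution (fun x _ => f x) (fun _ _ => rfl) (fun x hx _ => (hf x hx).2.2)
    (fun x hx => (hf x hx).1) (fun x hx => (hf x hx).2.1)

theorem even_card_edgeHalves_componentSet (hTH : IsEdgeSet K TH) {x : K.X}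
    (hx : x ∈ sgSet K TH) :
    Even (cfilter (fun y => K.IsEdgeHalf y) (componentSet K TH x)).card := by
  refine even_card_of_involution K.inv _ fun y hy => ?_
  obtain ⟨hyC, hyE⟩ := mem_cfilter.mp hy
  have hxy := mem_componentSet.mp hyC
  have hxy' := hxy.trans _ _ _ (eqv_inv K TH hTH (mem_sgSet_of_eqv hx hxy))
  exact ⟨mem_cfilter.mpr ⟨mem_componentSet.mpr hxy', isEdgeHalf_inv K hyE⟩, K.inv_invol y,
    hyE.2⟩

def EdgePath (K : PGraph) (TH : Finset K.X) : ℕ → K.X → K.X → Prop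
  | 0 => Eq
  | n + 1 => fun u w => ∃ h ∈ TH, K.rt h = u ∧ EdgePath K TH n (K.rt (K.inv h)) w

theorem EdgePath.trans {m n : ℕ} {u v w : K.X} (h₁ : EdgePath K TH m u v)
    (h₂ : EdgePath K TH n v w) : EdgePath K TH (m + n) u w := by
  induction m generalizing u with
  | zero => exact (Nat.zero_add n).symm ▸ (h₁ : u = v) ▸ h₂
  | succ m ih =>
    obtain ⟨h, hTH, hrt, hp⟩ := h₁
    rw [Nat.add_right_comm]
    exact ⟨h, hTH, hrt, ih hp⟩

theorem EdgePath.symm (hTH : IsEdgeSet K TH) {n : ℕ} {u w : K.X} (hp : EdgePath K TH n u w) :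
    EdgePath K TH n w u := by
  induction n generalizing u with
  | zero => exact Eq.symm hp
  | succ n ih =>
    obtain ⟨h, hh, rfl, hp⟩ := hp
    have hback : EdgePath K TH 1 (K.rt (K.inv h)) (K.rt h) :=
      ⟨K.inv h, (hTH h hh).2, rfl, by rw [K.inv_invol]; rfl⟩
    exact (ih hp).trans hback

theorem exists_edgePath_of_eqv (hTH : IsEdgeSet K TH) {a b : K.X}
    (h : Relation.EqvGen (contrRel K TH) a b) : ∃ n, EdgePath K TH n (K.rt a) (K.rt b) := by
  induction h with
  | rel a b hab =>
    obtain ⟨ha, -, hrt | hinv⟩ := hab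
    · exact ⟨0, by rw [← hrt, K.rt_idem]; rfl⟩
    · by_cases hv : K.IsVertex a
      · exact ⟨0, show K.rt a = K.rt b by rw [← hinv, ← hv, K.inv_fix_rt]⟩
      · exact ⟨1, a, (mem_sgSet_iff_of_isHalf hv).mp ha, rfl, by rw [hinv]; rfl⟩
  | refl a => exact ⟨0, rfl⟩
  | symm a b _ ih =>
    obtain ⟨n, hn⟩ := ih
    exact ⟨n, hn.symm hTH⟩
  | trans a b c _ _ ih₁ ih₂ =>
    obtain ⟨m, hm⟩ := ih₁
    obtain ⟨n, hn⟩ := ih₂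
    exact ⟨m + n, hm.trans hn⟩

/-- Junk value `0` (`sInf ∅`) when there is no path from `u` to `w`. -/
noncomputable def edgeDist (K : PGraph) (TH : Finset K.X) (u w : K.X) : ℕ :=
  sInf {n | EdgePath K TH n u w}

theorem exists_edgeDist_lt {u w : K.X} (hne : u ≠ w) {n : ℕ} (hn : EdgePath K TH n u w) :
    ∃ h ∈ TH, K.rt h = u ∧ edgeDist K TH (K.rt (K.inv h)) w < edgeDist K TH u w := by
  have hmin : EdgePath K TH (edgeDist K TH u w) u w :=
    Nat.sInf_mem (s := {n | EdgePath K TH n u w}) ⟨n, hn⟩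
  obtain ⟨m, hm⟩ : ∃ m, edgeDist K TH u w = m + 1 :=
    Nat.exists_eq_succ_of_ne_zero fun h0 => hne (by rw [h0] at hmin; exact hmin)
  rw [hm] at hmin
  obtain ⟨h, hh, hrt, hp⟩ := hmin
  exact ⟨h, hh, hrt, hm ▸ Nat.lt_succ_of_le (Nat.sInf_le hp)⟩

/-- Choosing at every vertex `w ∈ A` a half-edge `par w` towards a vertex closer to some base
point gives `#A` edges, whose `2 #A` halves are all distinct. -/
theorem two_mul_card_le_of_parent {A H : Finset K.X} (par : K.X → K.X) (d : K.X → ℕ)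
    (hrt : ∀ w ∈ A, K.rt (par w) = w) (hd : ∀ w ∈ A, d (K.rt (K.inv (par w))) < d w)
    (hH : ∀ w ∈ A, par w ∈ H ∧ K.inv (par w) ∈ H) : 2 * A.card ≤ H.card := by
  have hinj : Set.InjOn par A := fun a ha b hb hab => by
    rw [← hrt a ha, hab, hrt b hb]
  have hinj' : Set.InjOn (fun w => K.inv (par w)) A := fun a ha b hb hab =>
    hinj ha hb (by simpa [K.inv_invol] using congrArg K.inv hab)
  have hdisj : Disjoint (A.image par) (A.image fun w => K.inv (par w)) := by
    refine Finset.disjoint_left.mpr fun y hy₁ hy₂ => ?_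
    obtain ⟨w₁, hw₁, rfl⟩ := Finset.mem_image.mp hy₁
    obtain ⟨w₂, hw₂, he⟩ := Finset.mem_image.mp hy₂
    have h₁ := hd w₁ hw₁
    have h₂ := hd w₂ hw₂
    rw [← he, K.inv_invol, hrt w₂ hw₂] at h₁
    rw [he, hrt w₁ hw₁] at h₂
    omega
  have hsub : A.image par ∪ A.image (fun w => K.inv (par w)) ⊆ H :=
    Finset.union_subset (Finset.image_subset_iff.mpr fun w hw => (hH w hw).1)
      (Finset.image_subset_iff.mpr fun w hw => (hH w hw).2)
  have := Finset.card_le_card hsub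
  rw [Finset.card_union_of_disjoint hdisj, Finset.card_image_of_injOn hinj,
    Finset.card_image_of_injOn hinj'] at this
  omega

theorem two_mul_card_vertices_componentSet_le (hTH : IsEdgeSet K TH) {x : K.X}
    (hx : x ∈ sgSet K TH) :
    2 * (cfilter (fun y => K.IsVertex y) (componentSet K TH x)).card ≤
      (cfilter (fun y => K.IsEdgeHalf y) (componentSet K TH x)).card + 2 := by
  set V := cfilter (fun y => K.IsVertex y) (componentSet K TH x)
  have hx₀ : K.rt x ∈ V :=
    mem_cfilter.mpr ⟨mem_componentSet.mpr (eqv_rt K TH hx), K.rt_idem x⟩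
  have hparent : ∀ w ∈ V.erase (K.rt x), ∃ h ∈ TH, K.rt h = w ∧
      edgeDist K TH (K.rt (K.inv h)) (K.rt x) < edgeDist K TH w (K.rt x) := by
    intro w hw
    obtain ⟨hne, hwV⟩ := Finset.mem_erase.mp hw
    obtain ⟨hwC, hwv⟩ := mem_cfilter.mp hwV
    obtain ⟨n, hn⟩ := exists_edgePath_of_eqv hTH (Relation.EqvGen.symm _ _
      (mem_componentSet.mp hwC))
    rw [hwv] at hn
    exact exists_edgeDist_lt hne hn
  choose! par hpar using hparent
  have hbound := two_mul_card_le_of_parent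
    (H := cfilter (fun y => K.IsEdgeHalf y) (componentSet K TH x)) par
    (fun w => edgeDist K TH w (K.rt x))
    (fun w hw => (hpar w hw).2.1) (fun w hw => (hpar w hw).2.2) fun w hw => by
      obtain ⟨hTHw, hrt, -⟩ := hpar w hw
      have hxw := mem_componentSet.mp (mem_cfilter.mp (Finset.mem_of_mem_erase hw)).1
      have hsg := mem_sgSet_of_mem hTHw
      have hpw := eqv_rt K TH hsg
      rw [hrt] at hpw
      have hxp : Relation.EqvGen (contrRel K TH) x (par w) :=
        hxw.trans _ _ _ (Relation.EqvGen.symm _ _ hpw)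
      exact ⟨mem_cfilter.mpr ⟨mem_componentSet.mpr hxp, hTH.isEdgeHalf hTHw⟩,
        mem_cfilter.mpr ⟨mem_componentSet.mpr (hxp.trans _ _ _ (eqv_inv K TH hTH hsg)),
          isEdgeHalf_inv K (hTH.isEdgeHalf hTHw)⟩⟩
  rw [Finset.card_erase_of_mem hx₀] at hbound
  have := Finset.card_pos.mpr ⟨_, hx₀⟩
  omega

theorem sum_valence_componentSet (hTH : IsEdgeSet K TH) {x : K.X} (hx : x ∈ sgSet K TH) :
    ∑ u ∈ cfilter (fun y => K.IsVertex y) (componentSet K TH x), K.valence u =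
      (cfilter (fun y => K.IsEdgeHalf y) (componentSet K TH x)).card +
        (outerTangents K TH x).card := by
  have hdisj : (↑(cfilter (fun y => K.IsVertex y) (componentSet K TH x)) : Set K.X)
      |>.PairwiseDisjoint K.tangents := fun u₁ _ u₂ _ hne =>
    Finset.disjoint_left.mpr fun k hk₁ hk₂ =>
      hne ((mem_tangents.mp hk₁).2.symm.trans (mem_tangents.mp hk₂).2)
  have hdisj' : Disjoint (cfilter (fun y => K.IsEdgeHalf y) (componentSet K TH x))
      (outerTangents K TH x) := Finset.disjoint_left.mpr fun k hk₁ hk₂ =>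
    (mem_outerTangents.mp hk₂).2.1
      (mem_sgSet_of_eqv hx (mem_componentSet.mp (mem_cfilter.mp hk₁).1))
  simp only [PGraph.valence]
  rw [← Finset.card_biUnion hdisj, ← Finset.card_union_of_disjoint hdisj']
  congr 1
  ext k
  simp only [Finset.mem_biUnion, Finset.mem_union, mem_cfilter, mem_componentSet,
    mem_tangents, mem_outerTangents]
  constructor
  · rintro ⟨_, ⟨hxu, -⟩, hk, rfl⟩
    by_cases hks : k ∈ sgSet K TH
    · exact Or.inl ⟨hxu.trans _ _ _ (Relation.EqvGen.symm _ _ (eqv_rt K TH hks)),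
        hTH.isEdgeHalf ((mem_sgSet_iff_of_isHalf hk).mp hks)⟩
    · exact Or.inr ⟨hk, hks, Relation.EqvGen.symm _ _ hxu⟩
  · rintro (⟨hxk, hk⟩ | ⟨hk, -, hkx⟩)
    · exact ⟨K.rt k, ⟨hxk.trans _ _ _ (eqv_rt K TH (mem_sgSet_of_eqv hx hxk)), K.rt_idem k⟩,
        hk.1, rfl⟩
    · exact ⟨K.rt k, ⟨Relation.EqvGen.symm _ _ hkx, K.rt_idem k⟩, hk, rfl⟩

end Contraction

section Weighted

variable {W : WGraph} {TH : Finset W.X}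

theorem finsetGenus_componentSet_nonneg (hTH : IsEdgeSet W.toPGraph TH) {x : W.X}
    (hx : x ∈ sgSet W.toPGraph TH) : 0 ≤ finsetGenus W (componentSet W.toPGraph TH x) := by
  have hV := two_mul_card_vertices_componentSet_le hTH hx
  have hgw : 0 ≤ ∑ v ∈ cfilter (fun y => W.toPGraph.IsVertex y)
      (componentSet W.toPGraph TH x), (W.gw v : ℤ) :=
    Finset.sum_nonneg fun _ _ => Int.natCast_nonneg _
  unfold finsetGenus
  omega

theorem sum_chiV_componentSet (hTH : IsEdgeSet W.toPGraph TH) {x : W.X}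
    (hx : x ∈ sgSet W.toPGraph TH) :
    ∑ u ∈ cfilter (fun y => W.toPGraph.IsVertex y) (componentSet W.toPGraph TH x), W.chiV u =
      2 - 2 * finsetGenus W (componentSet W.toPGraph TH x) -
        (outerTangents W.toPGraph TH x).card := by
  obtain ⟨k, hk⟩ := even_card_edgeHalves_componentSet hTH hx
  have hval := congrArg (Nat.cast : ℕ → ℤ) (sum_valence_componentSet hTH hx)
  rw [hk] at hval
  push_cast at hval
  simp only [WGraph.chiV, finsetGenus, Finset.sum_sub_distrib, Finset.sum_const, nsmul_eq_mul,
    ← Finset.mul_sum]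
  rw [hk, show (k + k) / 2 = k by omega, hval]
  ring

theorem wcontract_gw_mk (hTH : IsEdgeSet W.toPGraph TH) (x : W.X) :
    (wcontract W TH hTH).gw (Quotient.mk (contrSetoid W.toPGraph TH) x) =
      if x ∈ sgSet W.toPGraph TH then (finsetGenus W (componentSet W.toPGraph TH x)).toNat
      else W.gw x :=
  rfl

theorem wcontract_valence_mk (hTH : IsEdgeSet W.toPGraph TH) (x : W.X) :
    (wcontract W TH hTH).valence (Quotient.mk (contrSetoid W.toPGraph TH) x) =
      (outerTangents W.toPGraph TH x).card :=
  contract_valence_mk hTH x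

theorem wcontract_chiV_mk_of_mem (hTH : IsEdgeSet W.toPGraph TH) {x : W.X}
    (hx : x ∈ sgSet W.toPGraph TH) :
    (wcontract W TH hTH).chiV (Quotient.mk (contrSetoid W.toPGraph TH) x) =
      ∑ u ∈ cfilter (fun y => W.toPGraph.IsVertex y) (componentSet W.toPGraph TH x),
        W.chiV u := by
  rw [sum_chiV_componentSet hTH hx]
  simp only [WGraph.chiV, wcontract_gw_mk, if_pos hx, wcontract_valence_mk,
    Int.toNat_of_nonneg (finsetGenus_componentSet_nonneg hTH hx)]

theorem wcontract_chiV_mk_of_not_mem (hTH : IsEdgeSet W.toPGraph TH) {x : W.X}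
    (hx : x ∉ sgSet W.toPGraph TH) :
    (wcontract W TH hTH).chiV (Quotient.mk (contrSetoid W.toPGraph TH) x) = W.chiV x := by
  simp only [WGraph.chiV, wcontract_gw_mk, if_neg hx, wcontract_valence_mk,
    outerTangents_of_not_mem hx]
  rfl

end Weighted

namespace HarmonicHom

variable {P' P : PGraph} (φ : HarmonicHom P' P) {SH : Finset P.X}

theorem isVertex_toFun {x : P'.X} (hx : P'.IsVertex x) : P.IsVertex (φ.toFun x) := by
  change P.rt (φ.toFun x) = φ.toFun x
  rw [← φ.map_rt, hx]

theorem isHalf_toFun (hfin : φ.Finite) {x : P'.X} (hx : P'.IsHalf x) :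
    P.IsHalf (φ.toFun x) := fun hv =>
  (hfin x hx).ne' ((φ.deg_zero_iff x hx).mpr hv)

theorem isVertex_of_isVertex_toFun (hfin : φ.Finite) {x : P'.X}
    (hx : P.IsVertex (φ.toFun x)) : P'.IsVertex x :=
  not_not.mp fun hc => φ.isHalf_toFun hfin hc hx

theorem isEdgeHalf_of_isEdgeHalf_toFun {x : P'.X} (hx : P'.IsHalf x)
    (hE : P.IsEdgeHalf (φ.toFun x)) : P'.IsEdgeHalf x :=
  ⟨hx, fun hc => hE.2 (by rw [← φ.map_inv, hc])⟩

theorem deg_pos_of_mem_tangents (hfin : φ.Finite) {v k : P'.X} (hv : P'.IsVertex v)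
    (hk : k ∈ P'.tangents v) : 0 < φ.deg v := by
  obtain ⟨hkh, hkr⟩ := mem_tangents.mp hk
  rw [φ.harmonic v hv (φ.toFun k) (φ.isHalf_toFun hfin hkh) (by rw [← φ.map_rt, hkr])]
  exact (hfin k hkh).trans_le
    (Finset.single_le_sum (fun _ _ => Nat.zero_le _) (mem_cfilter.mpr ⟨hk, rfl⟩))

theorem exists_tangent_toFun_eq {v : P'.X} (hv : P'.IsVertex v) (hdeg : 0 < φ.deg v)
    {h : P.X} (hh : P.IsHalf h) (hrt : P.rt h = φ.toFun v) :
    ∃ k ∈ P'.tangents v, φ.toFun k = h := by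
  rw [φ.harmonic v hv h hh hrt] at hdeg
  obtain ⟨k, hk, -⟩ := Finset.exists_ne_zero_of_sum_ne_zero hdeg.ne'
  exact ⟨k, (mem_cfilter.mp hk).1, (mem_cfilter.mp hk).2⟩

theorem mem_preimHalves (hSH : IsEdgeSet P SH) {x : P'.X} (hx : P'.IsHalf x)
    (hmem : φ.toFun x ∈ SH) : x ∈ preimHalves φ SH :=
  mem_cfilter.mpr ⟨Finset.mem_univ _,
    φ.isEdgeHalf_of_isEdgeHalf_toFun hx (hSH.isEdgeHalf hmem), hmem⟩

theorem toFun_mem_sgSet {x : P'.X} (hx : x ∈ sgSet P' (preimHalves φ SH)) :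
    φ.toFun x ∈ sgSet P SH := by
  rcases Finset.mem_union.mp hx with h1 | h1
  · exact mem_sgSet_of_mem (mem_cfilter.mp h1).2.2
  · obtain ⟨y, hy, rfl⟩ := Finset.mem_image.mp h1
    rw [φ.map_rt]
    exact mem_sgSet_rt P SH (mem_sgSet_of_mem (mem_cfilter.mp hy).2.2)

theorem eqv_toFun {a b : P'.X} (h : Relation.EqvGen (contrRel P' (preimHalves φ SH)) a b) :
    Relation.EqvGen (contrRel P SH) (φ.toFun a) (φ.toFun b) := by
  induction h with
  | rel a b hab =>
    refine Relation.EqvGen.rel _ _ ⟨φ.toFun_mem_sgSet hab.1, φ.toFun_mem_sgSet hab.2.1, ?_⟩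
    rcases hab.2.2 with rfl | rfl
    · exact Or.inl (φ.map_rt a).symm
    · exact Or.inr (φ.map_inv a).symm
  | refl a => exact Relation.EqvGen.refl _
  | symm a b _ ih => exact Relation.EqvGen.symm _ _ ih
  | trans a b c _ _ ih₁ ih₂ => exact Relation.EqvGen.trans _ _ _ ih₁ ih₂

theorem deg_pos_of_mem_sgSet (hfin : φ.Finite) (hSH : IsEdgeSet P SH) {v : P'.X}
    (hv : P'.IsVertex v) (hmem : v ∈ sgSet P' (preimHalves φ SH)) : 0 < φ.deg v := by
  obtain ⟨k, hk, rfl⟩ := exists_mem_rt_eq_of_isVertex (preimHalves_isEdgeSet φ SH hSH) hv hmem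
  exact φ.deg_pos_of_mem_tangents hfin hv
    (mem_tangents.mpr ⟨(mem_cfilter.mp hk).2.1.1, rfl⟩)

variable (SH) in
def LiftsTo (a b : P.X) : Prop :=
  ∀ x' ∈ sgSet P' (preimHalves φ SH), φ.toFun x' = a →
    ∃ y' ∈ sgSet P' (preimHalves φ SH),
      Relation.EqvGen (contrRel P' (preimHalves φ SH)) x' y' ∧ φ.toFun y' = b

variable {φ} in
theorem LiftsTo.trans {a b c : P.X} (hab : φ.LiftsTo SH a b) (hbc : φ.LiftsTo SH b c) :
    φ.LiftsTo SH a c := fun x' hx' hφ => by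
  obtain ⟨y', hy', hxy, hφy⟩ := hab x' hx' hφ
  obtain ⟨z', hz', hyz, hφz⟩ := hbc y' hy' hφy
  exact ⟨z', hz', hxy.trans _ _ _ hyz, hφz⟩

theorem liftsTo_of_contrRel (hSH : IsEdgeSet P SH) {a b : P.X} (hab : contrRel P SH a b) :
    φ.LiftsTo SH a b := fun x' hx' hφ => by
  have hS' := preimHalves_isEdgeSet φ SH hSH
  obtain ⟨-, -, hrt | hinv⟩ := hab
  · exact ⟨P'.rt x', mem_sgSet_rt P' _ hx', eqv_rt P' _ hx', by rw [φ.map_rt, hφ, hrt]⟩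
  by_cases hv : P'.IsVertex x'
  · refine ⟨x', hx', Relation.EqvGen.refl _, ?_⟩
    have hav : P.IsVertex a := hφ ▸ φ.isVertex_toFun hv
    have hfix := P.inv_fix_rt a
    rw [hav, hinv] at hfix
    rw [hφ, hfix]
  · exact ⟨P'.inv x', mem_sgSet_inv P' _ hS' hx', eqv_inv P' _ hS' hx',
      by rw [φ.map_inv, hφ, hinv]⟩

/-- The backward step along `a ↦ rt a = b` with `a ∈ S` is the one place where harmonicity
enters: a lift of `b` is a vertex of positive degree, so it has a tangent direction over `a`. -/
theorem liftsTo_of_contrRel_symm (hfin : φ.Finite) (hSH : IsEdgeSet P SH) {a b : P.X}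
    (hab : contrRel P SH a b) : φ.LiftsTo SH b a := fun x' hx' hφ => by
  obtain ⟨ha, hb, hrt | hinv⟩ := hab
  · by_cases hav : P.IsVertex a
    · exact ⟨x', hx', Relation.EqvGen.refl _, by rw [hφ, ← hrt, hav]⟩
    have hx'v : P'.IsVertex x' :=
      φ.isVertex_of_isVertex_toFun hfin (by rw [hφ, ← hrt]; exact P.rt_idem a)
    obtain ⟨k, hk, hka⟩ := φ.exists_tangent_toFun_eq hx'v
      (φ.deg_pos_of_mem_sgSet hfin hSH hx'v hx') hav (by rw [hrt, hφ])
    obtain ⟨hkh, hkr⟩ := mem_tangents.mp hk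
    have hks : k ∈ sgSet P' (preimHalves φ SH) := mem_sgSet_of_mem
      (φ.mem_preimHalves hSH hkh (hka ▸ (mem_sgSet_iff_of_isHalf hav).mp ha))
    have hkx := eqv_rt P' _ hks
    rw [hkr] at hkx
    exact ⟨k, hks, Relation.EqvGen.symm _ _ hkx, hka⟩
  · have hba : contrRel P SH b a := ⟨hb, ha, Or.inr (by rw [← hinv, P.inv_invol])⟩
    exact φ.liftsTo_of_contrRel hSH hba x' hx' hφ

theorem liftsTo_of_eqv (hfin : φ.Finite) (hSH : IsEdgeSet P SH) {a b : P.X}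
    (h : Relation.EqvGen (contrRel P SH) a b) : φ.LiftsTo SH a b := by
  suffices φ.LiftsTo SH a b ∧ φ.LiftsTo SH b a from this.1
  induction h with
  | rel a b hab =>
    exact ⟨φ.liftsTo_of_contrRel hSH hab, φ.liftsTo_of_contrRel_symm hfin hSH hab⟩
  | refl a => exact ⟨fun x' hx' hφ => ⟨x', hx', Relation.EqvGen.refl _, hφ⟩,
      fun x' hx' hφ => ⟨x', hx', Relation.EqvGen.refl _, hφ⟩⟩
  | symm a b _ ih => exact ih.symm
  | trans a b c _ _ ih₁ ih₂ => exact ⟨ih₁.1.trans ih₂.1, ih₂.2.trans ih₁.2⟩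

theorem sum_deg_eq_sum_deg_halves {h : P.X} (hh : P.IsHalf h) (W : Finset P'.X)
    (hW : ∀ u' ∈ W, P'.IsVertex u' ∧ φ.toFun u' = P.rt h) :
    ∑ u' ∈ W, φ.deg u' =
      ∑ k ∈ cfilter (fun k => P'.IsHalf k ∧ φ.toFun k = h ∧ P'.rt k ∈ W) Finset.univ,
        φ.deg k := by
  symm
  rw [← Finset.sum_fiberwise_of_maps_to (g := P'.rt) (t := W)
    fun k hk => (mem_cfilter.mp hk).2.2.2]
  refine Finset.sum_congr rfl fun u' hu' => ?_
  rw [φ.harmonic u' (hW u' hu').1 h hh (hW u' hu').2.symm]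
  congr 1
  ext k
  simp only [Finset.mem_filter, mem_cfilter, mem_tangents, Finset.mem_univ, true_and]
  constructor
  · rintro ⟨⟨hk, hkh, -⟩, rfl⟩
    exact ⟨⟨hk, rfl⟩, hkh⟩
  · rintro ⟨⟨hk, rfl⟩, hkh⟩
    exact ⟨⟨hk, hkh, hu'⟩, rfl⟩

variable (SH) in
noncomputable def compFiberDeg (x : P'.X) (u : P.X) : ℕ :=
  ∑ u' ∈ cfilter (fun u' => P'.IsVertex u' ∧
    Relation.EqvGen (contrRel P' (preimHalves φ SH)) u' x ∧ φ.toFun u' = u) Finset.univ,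
    φ.deg u'

variable (SH) in
noncomputable def compFiberHalves (x : P'.X) (h : P.X) : Finset P'.X :=
  cfilter (fun k => P'.IsHalf k ∧ φ.toFun k = h ∧
    Relation.EqvGen (contrRel P' (preimHalves φ SH)) (P'.rt k) x) Finset.univ

theorem mem_compFiberHalves {x k : P'.X} {h : P.X} :
    k ∈ φ.compFiberHalves SH x h ↔ P'.IsHalf k ∧ φ.toFun k = h ∧
      Relation.EqvGen (contrRel P' (preimHalves φ SH)) (P'.rt k) x := by
  simp only [compFiberHalves, mem_cfilter, Finset.mem_univ, true_and]

theorem compFiberDeg_rt (x : P'.X) {h : P.X} (hh : P.IsHalf h) :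
    φ.compFiberDeg SH x (P.rt h) = ∑ k ∈ φ.compFiberHalves SH x h, φ.deg k := by
  rw [compFiberDeg, φ.sum_deg_eq_sum_deg_halves hh _
    fun u' hu' => ⟨(mem_cfilter.mp hu').2.1, (mem_cfilter.mp hu').2.2.2⟩]
  congr 1
  ext k
  simp only [mem_cfilter, mem_compFiberHalves, Finset.mem_univ, true_and]
  constructor
  · rintro ⟨hk, hkh, -, heqv, -⟩
    exact ⟨hk, hkh, heqv⟩
  · rintro ⟨hk, hkh, heqv⟩
    exact ⟨hk, hkh, P'.rt_idem k, heqv, by rw [φ.map_rt, hkh]⟩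

theorem inv_mem_compFiberHalves (hSH : IsEdgeSet P SH) {x k : P'.X} {h : P.X} (hh : h ∈ SH)
    (hk : k ∈ φ.compFiberHalves SH x h) : P'.inv k ∈ φ.compFiberHalves SH x (P.inv h) := by
  obtain ⟨hkh, rfl, hkx⟩ := φ.mem_compFiberHalves.mp hk
  have hS' := preimHalves_isEdgeSet φ SH hSH
  have hkS := φ.mem_preimHalves hSH hkh hh
  have hks := mem_sgSet_of_mem hkS
  have hikx : Relation.EqvGen (contrRel P' (preimHalves φ SH)) (P'.rt (P'.inv k)) x :=
    (Relation.EqvGen.symm _ _ (eqv_rt P' _ (mem_sgSet_inv P' _ hS' hks))).trans _ _ _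
      ((Relation.EqvGen.symm _ _ (eqv_inv P' _ hS' hks)).trans _ _ _
        ((eqv_rt P' _ hks).trans _ _ _ hkx))
  exact φ.mem_compFiberHalves.mpr
    ⟨(isEdgeHalf_inv P' (hS'.isEdgeHalf hkS)).1, φ.map_inv k, hikx⟩

/-- Across an edge `h ∈ S` the involution matches the half-edges over `h` with those over
`inv h`, preserving degrees. -/
theorem compFiberDeg_rt_inv (hSH : IsEdgeSet P SH) (x : P'.X) {h : P.X} (hh : h ∈ SH) :
    φ.compFiberDeg SH x (P.rt h) = φ.compFiberDeg SH x (P.rt (P.inv h)) := by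
  have hhE := hSH.isEdgeHalf hh
  rw [φ.compFiberDeg_rt x hhE.1, φ.compFiberDeg_rt x (isEdgeHalf_inv P hhE).1]
  refine Finset.sum_nbij' P'.inv P'.inv (fun k hk => φ.inv_mem_compFiberHalves hSH hh hk)
    (fun k hk => ?_) (fun k _ => P'.inv_invol k) (fun k _ => P'.inv_invol k) (fun k hk => ?_)
  · simpa only [P.inv_invol] using φ.inv_mem_compFiberHalves hSH (hSH h hh).2 hk
  · obtain ⟨hkh, rfl, -⟩ := φ.mem_compFiberHalves.mp hk
    exact (φ.deg_edge k (φ.isEdgeHalf_of_isEdgeHalf_toFun hkh hhE)).symm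

theorem compFiberDeg_eq_of_eqv (hSH : IsEdgeSet P SH) (x : P'.X) {u₁ u₂ : P.X}
    (h₁ : P.IsVertex u₁) (h₂ : P.IsVertex u₂)
    (h : Relation.EqvGen (contrRel P SH) u₁ u₂) :
    φ.compFiberDeg SH x u₁ = φ.compFiberDeg SH x u₂ := by
  rw [← h₁, ← h₂]
  clear h₁ h₂
  induction h with
  | rel a b hab =>
    rcases hab.2.2 with rfl | rfl
    · rw [P.rt_idem]
    · by_cases ha : P.IsVertex a
      · rw [← ha, P.inv_fix_rt]
      · exact φ.compFiberDeg_rt_inv hSH x ((mem_sgSet_iff_of_isHalf ha).mp hab.1)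
  | refl a => rfl
  | symm a b _ ih => exact ih.symm
  | trans a b c _ _ ih₁ ih₂ => exact ih₁.trans ih₂

theorem compFiberDeg_congr {a b : P'.X}
    (hab : Relation.EqvGen (contrRel P' (preimHalves φ SH)) a b) (u : P.X) :
    φ.compFiberDeg SH a u = φ.compFiberDeg SH b u := by
  simp only [compFiberDeg]
  congr 1
  ext u'
  simp only [mem_cfilter, Finset.mem_univ, true_and]
  exact ⟨fun ⟨h₁, h₂, h₃⟩ => ⟨h₁, h₂.trans _ _ _ hab, h₃⟩,
    fun ⟨h₁, h₂, h₃⟩ =>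
      ⟨h₁, h₂.trans _ _ _ (Relation.EqvGen.symm _ _ hab), h₃⟩⟩

theorem sum_deg_filter_componentSet (x : P'.X) (u : P.X) :
    ∑ u' ∈ (cfilter (fun y => P'.IsVertex y) (componentSet P' (preimHalves φ SH) x)).filter
      (fun u' => φ.toFun u' = u), φ.deg u' = φ.compFiberDeg SH x u := by
  rw [compFiberDeg]
  congr 1
  ext u'
  simp only [Finset.mem_filter, mem_cfilter, mem_componentSet, Finset.mem_univ, true_and]
  exact ⟨fun ⟨⟨hxu, hu⟩, hφ⟩ => ⟨hu, Relation.EqvGen.symm _ _ hxu, hφ⟩,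
    fun ⟨hu, hux, hφ⟩ => ⟨⟨Relation.EqvGen.symm _ _ hux, hu⟩, hφ⟩⟩

theorem deg_eq_zero_of_toFun_mem_sgSet (hSH : IsEdgeSet P SH) {v : P'.X}
    (hv : v ∉ sgSet P' (preimHalves φ SH)) (hvv : P'.IsVertex v)
    (hφv : φ.toFun v ∈ sgSet P SH) : φ.deg v = 0 := by
  obtain ⟨g, hg, hgv⟩ := exists_mem_rt_eq_of_isVertex hSH (φ.isVertex_toFun hvv) hφv
  refine Nat.eq_zero_of_not_pos fun hdeg => hv ?_
  obtain ⟨k, hk, hkg⟩ := φ.exists_tangent_toFun_eq hvv hdeg (hSH.isEdgeHalf hg).1 hgv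
  obtain ⟨hkh, rfl⟩ := mem_tangents.mp hk
  exact mem_sgSet_rt P' _ (mem_sgSet_of_mem (φ.mem_preimHalves hSH hkh (hkg ▸ hg)))

theorem tangents_eq_empty_of_toFun_mem_sgSet (hfin : φ.Finite) (hSH : IsEdgeSet P SH)
    {v : P'.X} (hv : v ∉ sgSet P' (preimHalves φ SH)) (hvv : P'.IsVertex v)
    (hφv : φ.toFun v ∈ sgSet P SH) : P'.tangents v = ∅ :=
  Finset.eq_empty_of_forall_notMem fun _ hk =>
    (φ.deg_pos_of_mem_tangents hfin hvv hk).ne' (φ.deg_eq_zero_of_toFun_mem_sgSet hSH hv hvv hφv)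

variable (SH) in
noncomputable def contractMap :
    Quotient (contrSetoid P' (preimHalves φ SH)) → Quotient (contrSetoid P SH) :=
  Quotient.lift (fun x => Quotient.mk (contrSetoid P SH) (φ.toFun x))
    fun _ _ hab => mk_eq_mk_iff.mpr (φ.eqv_toFun hab)

/-- `rt (φ x)` is one vertex of the component of `φ x`; by `compFiberDeg_eq_of_eqv` any other
gives the same value. -/
noncomputable def contractDeg (hSH : IsEdgeSet P SH) :
    Quotient (contrSetoid P' (preimHalves φ SH)) → ℕ :=
  Quotient.lift
    (fun x => if x ∈ sgSet P' (preimHalves φ SH) then φ.compFiberDeg SH x (P.rt (φ.toFun x))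
      else φ.deg x)
    fun a b hab => by
      rcases eqv_cases P' (preimHalves φ SH) a b hab with rfl | ⟨ha, hb⟩
      · rfl
      · rw [if_pos ha, if_pos hb, φ.compFiberDeg_congr hab]
        exact φ.compFiberDeg_eq_of_eqv hSH b (P.rt_idem _) (P.rt_idem _)
          (rt_respects P SH _ _ (φ.eqv_toFun hab))

theorem contractDeg_mk (hSH : IsEdgeSet P SH) (x : P'.X) :
    φ.contractDeg hSH (Quotient.mk (contrSetoid P' (preimHalves φ SH)) x) =
      if x ∈ sgSet P' (preimHalves φ SH) then φ.compFiberDeg SH x (P.rt (φ.toFun x))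
      else φ.deg x :=
  rfl

theorem contractDeg_mk_of_mem (hSH : IsEdgeSet P SH) {x : P'.X}
    (hx : x ∈ sgSet P' (preimHalves φ SH)) {u : P.X} (hu : P.IsVertex u)
    (hux : Relation.EqvGen (contrRel P SH) u (φ.toFun x)) :
    φ.contractDeg hSH (Quotient.mk (contrSetoid P' (preimHalves φ SH)) x) =
      φ.compFiberDeg SH x u := by
  rw [contractDeg_mk, if_pos hx]
  exact φ.compFiberDeg_eq_of_eqv hSH x (P.rt_idem _) hu (Relation.EqvGen.symm _ _
    (hux.trans _ _ _ (eqv_rt P SH (φ.toFun_mem_sgSet hx))))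

theorem contractDeg_mk_of_not_mem (hSH : IsEdgeSet P SH) {x : P'.X}
    (hx : x ∉ sgSet P' (preimHalves φ SH)) :
    φ.contractDeg hSH (Quotient.mk (contrSetoid P' (preimHalves φ SH)) x) = φ.deg x := by
  rw [contractDeg_mk, if_neg hx]

theorem not_mem_sgSet_of_toFun_eq {h : P.X} (hh : h ∉ sgSet P SH) {k : P'.X}
    (hk : φ.toFun k = h) : k ∉ sgSet P' (preimHalves φ SH) :=
  fun hks => hh (hk ▸ φ.toFun_mem_sgSet hks)

theorem contractDeg_mk_eq_sum (hfin : φ.Finite) (hSH : IsEdgeSet P SH) {v : P'.X}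
    (hvv : (contract P' (preimHalves φ SH) (preimHalves_isEdgeSet φ SH hSH)).IsVertex
      (Quotient.mk _ v))
    {h : P.X} (hh : h ∉ sgSet P SH) (hhh : P.IsHalf h)
    (hrt : Relation.EqvGen (contrRel P SH) (P.rt h) (φ.toFun v)) :
    φ.contractDeg hSH (Quotient.mk (contrSetoid P' (preimHalves φ SH)) v) =
      ∑ k ∈ cfilter (fun k => φ.toFun k = h) (outerTangents P' (preimHalves φ SH) v),
        φ.deg k := by
  by_cases hv : v ∈ sgSet P' (preimHalves φ SH)
  · rw [φ.contractDeg_mk_of_mem hSH hv (P.rt_idem h) hrt, φ.compFiberDeg_rt v hhh]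
    congr 1
    ext k
    simp only [mem_compFiberHalves, mem_cfilter, mem_outerTangents]
    constructor
    · rintro ⟨hk, hkh, hkv⟩
      exact ⟨⟨hk, φ.not_mem_sgSet_of_toFun_eq hh hkh, hkv⟩, hkh⟩
    · rintro ⟨⟨hk, -, hkv⟩, hkh⟩
      exact ⟨hk, hkh, hkv⟩
  have hvv : P'.IsVertex v :=
    ((contract_isVertex_mk_iff (preimHalves_isEdgeSet φ SH hSH)).mp hvv).resolve_left hv
  rw [φ.contractDeg_mk_of_not_mem hSH hv, outerTangents_of_not_mem hv]
  by_cases hφv : φ.toFun v ∈ sgSet P SH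
  · rw [φ.tangents_eq_empty_of_toFun_mem_sgSet hfin hSH hv hvv hφv,
      φ.deg_eq_zero_of_toFun_mem_sgSet hSH hv hvv hφv]
    rfl
  · have hrt' : P.rt h = φ.toFun v :=
      (eqv_cases P SH _ _ hrt).resolve_right fun hmem => hφv hmem.2
    exact φ.harmonic v hvv h hhh hrt'

theorem sum_contractDeg_tangents_mk (hSH : IsEdgeSet P SH) (v : P'.X) {h : P.X}
    (hh : h ∉ sgSet P SH) :
    ∑ q ∈ cfilter (fun q => φ.contractMap SH q = Quotient.mk (contrSetoid P SH) h)
        ((contract P' (preimHalves φ SH) (preimHalves_isEdgeSet φ SH hSH)).tangents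
          (Quotient.mk _ v)), φ.contractDeg hSH q =
      ∑ k ∈ cfilter (fun k => φ.toFun k = h) (outerTangents P' (preimHalves φ SH) v),
        φ.deg k := by
  refine (sum_cfilter_contract_tangents _ v _ _).trans (Finset.sum_congr ?_ fun k hk =>
    φ.contractDeg_mk_of_not_mem hSH (mem_outerTangents.mp (mem_cfilter.mp hk).1).2.1)
  ext k
  simp only [mem_cfilter]
  exact and_congr_right fun _ => ⟨fun hk => (eq_of_mk_eq_mk hh hk.symm).symm,
    congrArg (Quotient.mk (contrSetoid P SH))⟩

noncomputable def contraction (hfin : φ.Finite) (hSH : IsEdgeSet P SH) :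
    HarmonicHom (contract P' (preimHalves φ SH) (preimHalves_isEdgeSet φ SH hSH))
      (contract P SH hSH) where
  toFun := φ.contractMap SH
  map_rt q := Quotient.inductionOn q fun a => congrArg (Quotient.mk _) (φ.map_rt a)
  map_inv q := Quotient.inductionOn q fun a => congrArg (Quotient.mk _) (φ.map_inv a)
  edge_not_leg q := Quotient.inductionOn q fun k hk hleg =>
    φ.edge_not_leg k (isEdgeHalf_of_contract_isEdgeHalf_mk _ hk).2
      (isLeg_of_contract_isLeg_mk hSH hleg).2
  deg := φ.contractDeg hSH
  deg_edge q := Quotient.inductionOn q fun k hk => by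
    obtain ⟨hks, hkE⟩ := isEdgeHalf_of_contract_isEdgeHalf_mk _ hk
    have hiks : P'.inv k ∉ sgSet P' (preimHalves φ SH) := fun hmem => hks (by
      simpa only [P'.inv_invol] using
        mem_sgSet_inv P' _ (preimHalves_isEdgeSet φ SH hSH) hmem)
    exact (φ.contractDeg_mk_of_not_mem hSH hiks).trans
      ((φ.deg_edge k hkE).trans (φ.contractDeg_mk_of_not_mem hSH hks).symm)
  deg_zero_iff q := Quotient.inductionOn q fun k hk => by
    obtain ⟨hks, hkh⟩ := (contract_isHalf_mk_iff _).mp hk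
    change φ.contractDeg hSH _ = 0 ↔ (contract P SH hSH).IsVertex (Quotient.mk _ (φ.toFun k))
    rw [φ.contractDeg_mk_of_not_mem hSH hks, φ.deg_zero_iff k hkh,
      contract_isVertex_mk_iff hSH, Iff.comm, or_iff_right_iff_imp]
    exact fun hφk => not_not.mp fun hφh =>
      hks (mem_sgSet_of_mem (φ.mem_preimHalves hSH hkh ((mem_sgSet_iff_of_isHalf hφh).mp hφk)))
  harmonic qv hqv qh hqh hqrt := by
    induction qv using Quotient.inductionOn with | h v => ?_
    induction qh using Quotient.inductionOn with | h h => ?_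
    obtain ⟨hh, hhh⟩ := (contract_isHalf_mk_iff hSH).mp hqh
    exact (φ.contractDeg_mk_eq_sum hfin hSH hqv hh hhh (mk_eq_mk_iff.mp hqrt)).trans
      (φ.sum_contractDeg_tangents_mk hSH v hh).symm

theorem contraction_deg (hfin : φ.Finite) (hSH : IsEdgeSet P SH) :
    (φ.contraction hfin hSH).deg = φ.contractDeg hSH :=
  rfl

theorem contraction_toFun_mk (hfin : φ.Finite) (hSH : IsEdgeSet P SH) (x : P'.X) :
    (φ.contraction hfin hSH).toFun (Quotient.mk _ x) =
      Quotient.mk (contrSetoid P SH) (φ.toFun x) :=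
  rfl

theorem contraction_finite (hfin : φ.Finite) (hSH : IsEdgeSet P SH) :
    (φ.contraction hfin hSH).Finite := fun q => Quotient.inductionOn q fun k hk => by
  obtain ⟨hks, hkh⟩ := (contract_isHalf_mk_iff _).mp hk
  rw [contraction_deg, φ.contractDeg_mk_of_not_mem hSH hks]
  exact hfin k hkh

end HarmonicHom

theorem Unramified.chiV_eq {G' G : WGraph} {φ : HarmonicHom G'.toPGraph G.toPGraph}
    (hunram : Unramified φ) {v : G'.X} (hv : G'.toPGraph.IsVertex v) :
    G'.chiV v = φ.deg v * G.chiV (φ.toFun v) := by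
  have := hunram v hv
  rw [ram] at this
  linarith

namespace HarmonicHom

variable {G' G : WGraph} (φ : HarmonicHom G'.toPGraph G.toPGraph) {SH : Finset G.X}

/-- Unramifiedness `χ(u') = d(u') χ(φ u')`, summed over a component of `[S']`: grouping its
vertices by their images, each vertex of the image component is hit with total degree `d`. -/
theorem sum_chiV_componentSet_eq_mul (hunram : Unramified φ) (hSH : IsEdgeSet G.toPGraph SH)
    {v : G'.X} (hv : v ∈ sgSet G'.toPGraph (preimHalves φ SH)) :
    ∑ u' ∈ cfilter (fun y => G'.toPGraph.IsVertex y)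
        (componentSet G'.toPGraph (preimHalves φ SH) v), G'.chiV u' =
      (φ.compFiberDeg SH v (G.toPGraph.rt (φ.toFun v)) : ℤ) *
        ∑ u ∈ cfilter (fun y => G.toPGraph.IsVertex y)
          (componentSet G.toPGraph SH (φ.toFun v)), G.chiV u := by
  have hmaps : ∀ u' ∈ cfilter (fun y => G'.toPGraph.IsVertex y)
      (componentSet G'.toPGraph (preimHalves φ SH) v), φ.toFun u' ∈
        cfilter (fun y => G.toPGraph.IsVertex y) (componentSet G.toPGraph SH (φ.toFun v)) :=
    fun u' hu' => mem_cfilter.mpr ⟨mem_componentSet.mpr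
      (φ.eqv_toFun (mem_componentSet.mp (mem_cfilter.mp hu').1)),
      φ.isVertex_toFun (mem_cfilter.mp hu').2⟩
  rw [Finset.mul_sum, ← Finset.sum_fiberwise_of_maps_to hmaps]
  refine Finset.sum_congr rfl fun u hu => ?_
  obtain ⟨huC, huv⟩ := mem_cfilter.mp hu
  rw [φ.compFiberDeg_eq_of_eqv hSH v (G.toPGraph.rt_idem _) huv
    ((Relation.EqvGen.symm _ _ (eqv_rt _ _ (φ.toFun_mem_sgSet hv))).trans _ _ _
      (mem_componentSet.mp huC)), ← sum_deg_filter_componentSet, Nat.cast_sum, Finset.sum_mul]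
  refine Finset.sum_congr rfl fun u' hu' => ?_
  obtain ⟨hu'V, rfl⟩ := Finset.mem_filter.mp hu'
  exact hunram.chiV_eq (mem_cfilter.mp hu'V).2

theorem contraction_unramified (hfin : φ.Finite) (hunram : Unramified φ)
    (hSH : IsEdgeSet G.toPGraph SH) :
    Unramified (G' := wcontract G' (preimHalves φ SH) (preimHalves_isEdgeSet φ SH hSH))
      (G := wcontract G SH hSH) (φ.contraction hfin hSH) := by
  have hS' := preimHalves_isEdgeSet φ SH hSH
  intro q hq
  induction q using Quotient.inductionOn with | h v => ?_
  simp only [ram, contraction_deg, contraction_toFun_mk]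
  by_cases hv : v ∈ sgSet G'.toPGraph (preimHalves φ SH)
  · rw [wcontract_chiV_mk_of_mem hSH (φ.toFun_mem_sgSet hv), wcontract_chiV_mk_of_mem hS' hv,
      contractDeg_mk, if_pos hv, φ.sum_chiV_componentSet_eq_mul hunram hSH hv, sub_self]
  have hvv : G'.toPGraph.IsVertex v :=
    ((contract_isVertex_mk_iff hS').mp hq).resolve_left hv
  rw [wcontract_chiV_mk_of_not_mem hS' hv, φ.contractDeg_mk_of_not_mem hSH hv]
  by_cases hφv : φ.toFun v ∈ sgSet G.toPGraph SH
  · rw [hunram.chiV_eq hvv, φ.deg_eq_zero_of_toFun_mem_sgSet hSH hv hvv hφv]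
    simp
  · rw [wcontract_chiV_mk_of_not_mem hSH hφv]
    exact hunram v hvv

theorem contraction_isContractionHom (hfin : φ.Finite) (hSH : IsEdgeSet G.toPGraph SH) :
    IsContractionHom φ SH hSH (preimHalves φ SH) (preimHalves_isEdgeSet φ SH hSH)
      (φ.contraction hfin hSH) :=
  ⟨fun _ => rfl, fun _ hx => φ.contractDeg_mk_of_not_mem hSH hx,
    fun _ hx _ hu hux => φ.contractDeg_mk_of_mem hSH hx hu hux⟩

end HarmonicHom

/-- Let `φ : (G',g') → (G,g)` be an unramified finite harmonic morphism of
weighted graphs and `S ⊆ E(G)` (encoded by the inv-closed set `SH` of half-edges), with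
`S' = φ⁻¹(S)`.  Then: (a) every connected component `F'` of `[S']` maps onto the component
`F` of `[S]` containing its image, and `Σ { d_φ(u') : u' ∈ V(F'), φ(u') = u }` is
independent of the choice of vertex `u ∈ V(F)`; (b) the contraction
`φ_S : G'/S' → G/S` is again an unramified finite harmonic morphism of weighted graphs. -/
theorem contraction_of_unramified_harmonic
    (G' G : WGraph) (φ : HarmonicHom G'.toPGraph G.toPGraph)
    (hfin : φ.Finite) (hunram : Unramified φ)
    (SH : Finset G.X) (hSH : IsEdgeSet G.toPGraph SH) :
    -- part (a): components of [S'] map onto components of [S] ...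
    ((∀ x ∈ sgSet G'.toPGraph (preimHalves φ SH), φ.toFun x ∈ sgSet G.toPGraph SH) ∧
     (∀ x ∈ sgSet G'.toPGraph (preimHalves φ SH), ∀ y ∈ sgSet G.toPGraph SH,
        (contrSetoid G.toPGraph SH).r (φ.toFun x) y →
        ∃ x', x' ∈ sgSet G'.toPGraph (preimHalves φ SH) ∧
          (contrSetoid G'.toPGraph (preimHalves φ SH)).r x x' ∧ φ.toFun x' = y) ∧
     -- ... and the vertex fiber sums over a component are independent of the base vertex
     (∀ x ∈ sgSet G'.toPGraph (preimHalves φ SH), ∀ u₁ u₂ : G.X,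
        G.toPGraph.IsVertex u₁ → (contrSetoid G.toPGraph SH).r u₁ (φ.toFun x) →
        G.toPGraph.IsVertex u₂ → (contrSetoid G.toPGraph SH).r u₂ (φ.toFun x) →
        (∑ u' ∈ cfilter (fun u' => G'.toPGraph.IsVertex u' ∧
            (contrSetoid G'.toPGraph (preimHalves φ SH)).r u' x ∧ φ.toFun u' = u₁)
            Finset.univ, φ.deg u') =
        (∑ u' ∈ cfilter (fun u' => G'.toPGraph.IsVertex u' ∧
            (contrSetoid G'.toPGraph (preimHalves φ SH)).r u' x ∧ φ.toFun u' = u₂)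
            Finset.univ, φ.deg u'))) ∧
    -- part (b): the contracted morphism exists and is unramified, finite and harmonic
    (∃ ψS : HarmonicHom
        (wcontract G' (preimHalves φ SH) (preimHalves_isEdgeSet φ SH hSH)).toPGraph
        (wcontract G SH hSH).toPGraph,
      IsContractionHom φ SH hSH (preimHalves φ SH) (preimHalves_isEdgeSet φ SH hSH) ψS ∧
      ψS.Finite ∧ Unramified ψS) := by
  refine ⟨⟨fun x hx => φ.toFun_mem_sgSet hx, fun x hx y _ hxy => ?_, ?_⟩,
    φ.contraction hfin hSH, φ.contraction_isContractionHom hfin hSH,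
    φ.contraction_finite hfin hSH, φ.contraction_unramified hfin hunram hSH⟩
  · exact φ.liftsTo_of_eqv hfin hSH hxy x hx rfl
  · intro x _ u₁ u₂ h₁ hr₁ h₂ hr₂
    exact φ.compFiberDeg_eq_of_eqv hSH x h₁ h₂
      (hr₁.trans _ _ _ (Relation.EqvGen.symm _ _ hr₂))

end TropDR
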